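/- Let h>0, α∈(0,1] and let u: ℕ→ℝ be any sequence. Then for every n∈ℕ, the fractional h-sum of order α of the Caputo h-difference of order α of u satisfies (S_α(C_α u))(n) = u(n+1) − u(0). (This is Proposition 8 of the paper: (_0Δ_h^{−α}(_aΔ^α_{h,*}x))(nh+a) = x(nh+a) − x(a) for n≥1, with a=(α−1)h.) -/

import Mathlib

/-!
Identify a sequence with the power series of its values. Since `c_γ(m) = Γ(γ+m)/(Γ(γ) m!)` is the
rising factorial `γ(γ+1)⋯(γ+m-1)/m!`, i.e. the coefficient of `X^m` in `(1 - X)^(-γ)`, the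
fractional sum `S_γ` is multiplication by `h^γ (1 - X)^(-γ)`. Hence `S_γ ∘ S_δ = S_{γ+δ}`
(Chu–Vandermonde). For `α < 1` the Caputo difference is `S_{1-α}` applied to the difference
quotient of `u`, so `S_α (C_α u) = S_1` of that quotient: `h` times its partial sums, which telescope.
-/

/-- `c γ m = Γ(γ+m)/(Γ(γ)·Γ(m+1))`. -/
noncomputable def cCoeff (γ : ℝ) (m : ℕ) : ℝ :=
  Real.Gamma (γ + m) / (Real.Gamma γ * Real.Gamma (m + 1))

/-- Fractional `h`-sum of order `γ`: `(S_γ u)(n) = h^γ·∑_{k=0}^{n} c_γ(n−k)·u(k)`. -/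
noncomputable def fracSum (h γ : ℝ) (u : ℕ → ℝ) (n : ℕ) : ℝ :=
  h ^ γ * ∑ k ∈ Finset.range (n + 1), cCoeff γ (n - k) * u k

/-- Caputo `h`-difference of order `α ∈ (0,1]`. -/
noncomputable def caputo (h α : ℝ) (u : ℕ → ℝ) (n : ℕ) : ℝ :=
  if α < 1 then
    h ^ (1 - α) * ∑ k ∈ Finset.range (n + 1), cCoeff (1 - α) (n - k) * ((u (k + 1) - u k) / h)
  else (u (n + 1) - u n) / h

open PowerSeries Finset

namespace PowerSeries

variable {R : Type*} [CommRing R] [BinomialRing R]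

theorem coeff_rescale_neg_one_binomialSeries_neg (r : R) (n : ℕ) :
    coeff n (rescale (-1 : R) (binomialSeries R (-r))) = Ring.multichoose r n := by
  rw [coeff_rescale, binomialSeries_coeff, Ring.choose_neg', smul_eq_mul, mul_one, Units.smul_def,
    Int.coe_negOnePow_natCast, zsmul_eq_mul, ← mul_assoc]
  push_cast
  rw [← mul_pow, neg_one_mul, neg_neg, one_pow, one_mul]

theorem mk_multichoose_add (r s : R) :
    mk (Ring.multichoose (r + s)) = mk (Ring.multichoose r) * mk (Ring.multichoose s) := by
  ext n
  simp only [coeff_mk, ← coeff_rescale_neg_one_binomialSeries_neg, neg_add, binomialSeries_add,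
    map_mul, coeff_mul]

end PowerSeries

theorem Real.Gamma_add_nat_eq_ascPochhammer_mul {s : ℝ} (hs : ∀ m : ℕ, s ≠ -m) (n : ℕ) :
    Real.Gamma (s + n) = (ascPochhammer ℝ n).eval s * Real.Gamma s := by
  induction n with
  | zero => simp
  | succ n ih =>
    have hsn : s + n ≠ 0 := fun h => hs n (eq_neg_of_add_eq_zero_left h)
    rw [Nat.cast_succ, ← add_assoc, Real.Gamma_add_one hsn, ih, ascPochhammer_succ_eval]
    ring

theorem cCoeff_eq_multichoose {γ : ℝ} (hγ : ∀ m : ℕ, γ ≠ -m) : cCoeff γ = Ring.multichoose γ := by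
  funext m
  have hfact := Ring.factorial_nsmul_multichoose_eq_ascPochhammer γ m
  rw [Polynomial.ascPochhammer_smeval_eq_eval, nsmul_eq_mul] at hfact
  rw [cCoeff, Real.Gamma_add_nat_eq_ascPochhammer_mul hγ, Real.Gamma_nat_eq_factorial, ← hfact]
  field_simp [Real.Gamma_ne_zero hγ, Nat.factorial_ne_zero]

theorem cCoeff_eq_multichoose_of_pos {γ : ℝ} (hγ : 0 < γ) : cCoeff γ = Ring.multichoose γ :=
  cCoeff_eq_multichoose fun m => by linarith [m.cast_nonneg (α := ℝ)]

theorem cCoeff_one : cCoeff 1 = 1 := by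
  rw [cCoeff_eq_multichoose_of_pos one_pos]
  exact funext Ring.multichoose_one

theorem mk_cCoeff_add {γ δ : ℝ} (hγ : 0 < γ) (hδ : 0 < δ) :
    mk (cCoeff (γ + δ)) = mk (cCoeff γ) * mk (cCoeff δ) := by
  rw [cCoeff_eq_multichoose_of_pos hγ, cCoeff_eq_multichoose_of_pos hδ,
    cCoeff_eq_multichoose_of_pos (add_pos hγ hδ), mk_multichoose_add]

theorem mk_fracSum (h γ : ℝ) (u : ℕ → ℝ) :
    mk (fracSum h γ u) = h ^ γ • (mk (cCoeff γ) * mk u) := by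
  ext n
  rw [coeff_mk, coeff_smul, mul_comm, coeff_mul, Finset.Nat.sum_antidiagonal_eq_sum_range_succ
    (fun i j => coeff i (mk u) * coeff j (mk (cCoeff γ))), fracSum, smul_eq_mul]
  simp only [coeff_mk, mul_comm (u _)]

theorem fracSum_fracSum {h γ δ : ℝ} (hh : 0 ≤ h) (hγ : 0 < γ) (hδ : 0 < δ) (u : ℕ → ℝ) :
    fracSum h γ (fracSum h δ u) = fracSum h (γ + δ) u := by
  have hmk : mk (fracSum h γ (fracSum h δ u)) = mk (fracSum h (γ + δ) u) := by
    rw [mk_fracSum, mk_fracSum, mk_fracSum, mk_cCoeff_add hγ hδ,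
      Real.rpow_add' hh (add_pos hγ hδ).ne', mul_smul, mul_smul_comm, mul_assoc]
  funext n
  simpa only [coeff_mk] using congrArg (coeff n) hmk

theorem fracSum_one (h : ℝ) (u : ℕ → ℝ) (n : ℕ) :
    fracSum h 1 u n = h * ∑ k ∈ range (n + 1), u k := by
  simp [fracSum, cCoeff_one]

theorem caputo_of_lt_one {h α : ℝ} (hα : α < 1) (u : ℕ → ℝ) :
    caputo h α u = fracSum h (1 - α) (fun k => (u (k + 1) - u k) / h) :=
  funext fun _ => if_pos hα

theorem caputo_one (h : ℝ) (u : ℕ → ℝ) : caputo h 1 u = fun k => (u (k + 1) - u k) / h :=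
  funext fun _ => if_neg (lt_irrefl 1)

theorem fracSum_caputo (h α : ℝ) (hh : 0 < h) (hα1 : 0 < α) (hα2 : α ≤ 1)
    (u : ℕ → ℝ) (n : ℕ) :
    fracSum h α (caputo h α u) n = u (n + 1) - u 0 := by
  have htelescope : fracSum h 1 (fun k => (u (k + 1) - u k) / h) n = u (n + 1) - u 0 := by
    rw [fracSum_one, ← sum_div, sum_range_sub, mul_div_cancel₀ _ hh.ne']
  rcases hα2.lt_or_eq with hα | rfl
  · rw [caputo_of_lt_one hα, fracSum_fracSum hh.le hα1 (sub_pos.2 hα), add_sub_cancel, htelescope]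
  · rw [caputo_one, htelescope]
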